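/- For a faithful density matrix π and any Hermitian A, the arithmetic mean dominates the logarithmic mean: Tr[A·(Aπ+πA)/2] ≥ Tr[A ∫₀¹ π^s A π^{1-s} ds] ≥ 0. -/

import Mathlib

/-!
In an orthonormal eigenbasis `(uᵢ)` of `π`, with eigenvalues `λᵢ > 0` and weights
`cᵢⱼ = |⟨uᵢ, A uⱼ⟩|² ≥ 0`, both traces become real double sums:
`Tr[A (Aπ + πA)/2] = ∑ cᵢⱼ (λⱼ + λᵢ)/2` and `Tr[A 𝕁(A)] = ∑ cᵢⱼ ∫₀¹ λⱼ^s λᵢ^(1-s) ds`.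
The theorem is then the scalar fact that the integrated weighted geometric mean
`∫₀¹ a^s b^(1-s) ds` is nonnegative and, by weighted AM–GM, at most `(a + b)/2`.
-/

open Matrix MeasureTheory ComplexOrder

/-- `mpow π hπ s` is the matrix power `π ^ s` for `s : ℝ`, defined via the spectral
decomposition of the Hermitian matrix `π`. -/
noncomputable def mpow {n : ℕ} (π : Matrix (Fin n) (Fin n) ℂ) (hπ : π.IsHermitian) (s : ℝ) :
    Matrix (Fin n) (Fin n) ℂ :=
  (hπ.eigenvectorUnitary : Matrix (Fin n) (Fin n) ℂ) *
    Matrix.diagonal (fun i => ((hπ.eigenvalues i ^ s : ℝ) : ℂ)) *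
    star (hπ.eigenvectorUnitary : Matrix (Fin n) (Fin n) ℂ)

/-- The logarithmic matrix mean `𝕁(B) = ∫₀¹ π^s B π^{1-s} ds`, defined entrywise. -/
noncomputable def Jmean {n : ℕ} (π : Matrix (Fin n) (Fin n) ℂ) (hπ : π.IsHermitian)
    (B : Matrix (Fin n) (Fin n) ℂ) : Matrix (Fin n) (Fin n) ℂ :=
  Matrix.of fun i j => ∫ s in (0:ℝ)..1, (mpow π hπ s * B * mpow π hπ (1 - s)) i j

open intervalIntegral

section LogarithmicMean

variable {a b : ℝ}

lemma continuous_rpow_mul_rpow_one_sub (ha : 0 < a) (hb : 0 < b) :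
    Continuous fun s : ℝ => a ^ s * b ^ (1 - s) :=
  (continuous_const.rpow continuous_id fun _ => Or.inl ha.ne').mul
    (continuous_const.rpow (continuous_const.sub continuous_id) fun _ => Or.inl hb.ne')

lemma integral_rpow_mul_rpow_one_sub_nonneg (ha : 0 ≤ a) (hb : 0 ≤ b) :
    0 ≤ ∫ s in (0:ℝ)..1, a ^ s * b ^ (1 - s) :=
  integral_nonneg zero_le_one fun _ _ => by positivity

lemma integral_rpow_mul_rpow_one_sub_le (ha : 0 < a) (hb : 0 < b) :
    ∫ s in (0:ℝ)..1, a ^ s * b ^ (1 - s) ≤ (a + b) / 2 := by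
  calc ∫ s in (0:ℝ)..1, a ^ s * b ^ (1 - s)
      ≤ ∫ s in (0:ℝ)..1, (s * a + (1 - s) * b) := by
        refine integral_mono_on zero_le_one
          ((continuous_rpow_mul_rpow_one_sub ha hb).intervalIntegrable _ _)
          (Continuous.intervalIntegrable (by fun_prop) _ _) fun s hs => ?_
        exact Real.geom_mean_le_arith_mean2_weighted hs.1 (by linarith [hs.2]) ha.le hb.le
          (by ring)
    _ = (a + b) / 2 := by
        rw [integral_add (Continuous.intervalIntegrable (by fun_prop) _ _)
            (Continuous.intervalIntegrable (by fun_prop) _ _),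
          intervalIntegral.integral_mul_const, intervalIntegral.integral_mul_const,
          integral_sub intervalIntegrable_const intervalIntegrable_id, integral_id,
          intervalIntegral.integral_const]
        norm_num
        ring

end LogarithmicMean

section TraceFormulas

variable {ι : Type*} [Fintype ι] [DecidableEq ι]

lemma Matrix.IsHermitian.trace_mul_diagonal_mul_mul_diagonal {B : Matrix ι ι ℂ}
    (hB : B.IsHermitian) (d e : ι → ℂ) :
    (B * diagonal d * (B * diagonal e)).trace =
      ∑ i, ∑ j, (Complex.normSq (B i j) : ℂ) * d j * e i := by
  refine Finset.sum_congr rfl fun i _ => ?_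
  rw [diag_apply, mul_apply]
  refine Finset.sum_congr rfl fun j _ => ?_
  rw [mul_diagonal, mul_diagonal, ← hB.apply i j, Complex.normSq_eq_conj_mul_self,
    RCLike.star_def, Complex.conj_conj]
  ring

lemma trace_mul_conj_diagonal_mul_mul_conj_diagonal {A U : Matrix ι ι ℂ}
    (hA : A.IsHermitian) (hU : U ∈ unitaryGroup ι ℂ) (d e : ι → ℂ) :
    (A * (U * diagonal d * star U * A * (U * diagonal e * star U))).trace =
      ∑ i, ∑ j, (Complex.normSq ((star U * A * U) i j) : ℂ) * d j * e i := by
  have hB : (star U * A * U).IsHermitian := by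
    simpa [Matrix.star_eq_conjTranspose] using isHermitian_conjTranspose_mul_mul U hA
  have hUU : star U * U = 1 := mem_unitaryGroup_iff'.mp hU
  have hA_eq : A = U * (star U * A * U) * star U := by
    simp only [← Matrix.mul_assoc, mem_unitaryGroup_iff.mp hU, Matrix.one_mul]
    rw [Matrix.mul_assoc, mem_unitaryGroup_iff.mp hU, Matrix.mul_one]
  have hconj : A * (U * diagonal d * star U * A * (U * diagonal e * star U)) =
      U * (star U * A * U * diagonal d * (star U * A * U * diagonal e)) * star U := by
    conv_lhs => rw [hA_eq]
    simp only [Matrix.mul_assoc, ← Matrix.mul_assoc (star U) U, hUU, Matrix.one_mul]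
  rw [hconj, trace_mul_cycle, hUU, Matrix.one_mul, hB.trace_mul_diagonal_mul_mul_diagonal]

end TraceFormulas

lemma intervalIntegral.integral_sum_sum {E : Type*} [NormedAddCommGroup E] [NormedSpace ℝ E]
    {ι κ : Type*} [Fintype ι] [Fintype κ] {f : ι → κ → ℝ → E} (hf : ∀ i j, Continuous (f i j))
    (a b : ℝ) :
    ∫ s in a..b, ∑ i, ∑ j, f i j s = ∑ i, ∑ j, ∫ s in a..b, f i j s := by
  rw [integral_finsetSum fun i _ =>
    (continuous_finsetSum _ fun j _ => hf i j).intervalIntegrable _ _]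
  exact Finset.sum_congr rfl fun i _ =>
    integral_finsetSum fun j _ => (hf i j).intervalIntegrable _ _

lemma trace_mul_of_intervalIntegral {ι : Type*} [Fintype ι] {F : ℝ → Matrix ι ι ℂ}
    (hF : Continuous F) (A : Matrix ι ι ℂ) (a b : ℝ) :
    (A * of fun i j => ∫ s in a..b, F s i j).trace = ∫ s in a..b, (A * F s).trace := by
  simp only [trace, diag, mul_apply, of_apply]
  rw [integral_sum_sum fun i k => (hF.matrix_elem k i).const_mul (A i k)]
  simp only [intervalIntegral.integral_const_mul]

section MatrixPower

variable {n : ℕ} {π : Matrix (Fin n) (Fin n) ℂ}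

/-- The weight `|⟨uᵢ, A uⱼ⟩|²` of `A` in the eigenbasis `(uᵢ)` of `π`. -/
noncomputable def eigenbasisWeight (hπ : π.IsHermitian) (A : Matrix (Fin n) (Fin n) ℂ)
    (i j : Fin n) : ℝ :=
  Complex.normSq ((star (hπ.eigenvectorUnitary : Matrix (Fin n) (Fin n) ℂ) * A *
    (hπ.eigenvectorUnitary : Matrix (Fin n) (Fin n) ℂ)) i j)

lemma mpow_zero (hπ : π.IsHermitian) : mpow π hπ 0 = 1 := by
  simp [mpow]

lemma mpow_one (hπ : π.IsHermitian) : mpow π hπ 1 = π := by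
  conv_rhs => rw [hπ.spectral_theorem, Unitary.conjStarAlgAut_apply]
  simp [mpow, Function.comp_def]

lemma continuous_mpow (hπ : π.PosDef) : Continuous (mpow π hπ.1) := by
  have hpow : ∀ i, Continuous fun s : ℝ => ((hπ.1.eigenvalues i ^ s : ℝ) : ℂ) := fun i =>
    Complex.continuous_ofReal.comp
      (continuous_const.rpow continuous_id fun _ => Or.inl (hπ.eigenvalues_pos i).ne')
  exact (continuous_const.matrix_mul (continuous_pi hpow).matrix_diagonal).matrix_mul
    continuous_const

variable {A : Matrix (Fin n) (Fin n) ℂ}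

lemma trace_mul_mpow_mul_mpow (hπ : π.IsHermitian) (hA : A.IsHermitian) (s t : ℝ) :
    (A * (mpow π hπ s * A * mpow π hπ t)).trace =
      ((∑ i, ∑ j, eigenbasisWeight hπ A i j * (hπ.eigenvalues j ^ s * hπ.eigenvalues i ^ t) :
        ℝ) : ℂ) := by
  rw [mpow, mpow, trace_mul_conj_diagonal_mul_mul_conj_diagonal hA (Subtype.prop _)]
  push_cast
  simp only [eigenbasisWeight, mul_assoc]

lemma trace_mul_Jmean (hπ : π.PosDef) (hA : A.IsHermitian) :
    (A * Jmean π hπ.1 A).trace =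
      ((∑ i, ∑ j, eigenbasisWeight hπ.1 A i j *
        ∫ s in (0:ℝ)..1, hπ.1.eigenvalues j ^ s * hπ.1.eigenvalues i ^ (1 - s) : ℝ) : ℂ) := by
  have hF : Continuous fun s => mpow π hπ.1 s * A * mpow π hπ.1 (1 - s) :=
    ((continuous_mpow hπ).matrix_mul continuous_const).matrix_mul
      ((continuous_mpow hπ).comp (continuous_const.sub continuous_id))
  rw [Jmean, trace_mul_of_intervalIntegral hF]
  simp_rw [trace_mul_mpow_mul_mpow hπ.1 hA]
  rw [integral_ofReal, integral_sum_sum fun i j =>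
    (continuous_rpow_mul_rpow_one_sub (hπ.eigenvalues_pos j) (hπ.eigenvalues_pos i)).const_mul _]
  simp only [intervalIntegral.integral_const_mul]

lemma trace_mul_half_smul_mul_add_mul (hπ : π.IsHermitian) (hA : A.IsHermitian) :
    (A * (((1 : ℂ)/2) • (A * π + π * A))).trace =
      ((∑ i, ∑ j, eigenbasisWeight hπ A i j * ((hπ.eigenvalues j + hπ.eigenvalues i) / 2) :
        ℝ) : ℂ) := by
  have hleft : A * (A * π) = A * (mpow π hπ 0 * A * mpow π hπ 1) := by
    rw [mpow_zero, mpow_one, Matrix.one_mul]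
  have hright : A * (π * A) = A * (mpow π hπ 1 * A * mpow π hπ 0) := by
    rw [mpow_zero, mpow_one, Matrix.mul_one]
  rw [Matrix.mul_smul, Matrix.mul_add, trace_smul, trace_add, hleft, hright,
    trace_mul_mpow_mul_mpow hπ hA, trace_mul_mpow_mul_mpow hπ hA]
  simp only [Real.rpow_zero, Real.rpow_one, one_mul, mul_one]
  push_cast
  simp only [← Finset.sum_add_distrib, smul_eq_mul, Finset.mul_sum]
  exact Finset.sum_congr rfl fun i _ => Finset.sum_congr rfl fun j _ => by ring

end MatrixPower

theorem stmt4_general {n : ℕ} (π : Matrix (Fin n) (Fin n) ℂ) (hπ : π.PosDef)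
    (A : Matrix (Fin n) (Fin n) ℂ) (hA : A.IsHermitian) :
    (A * (((1 : ℂ)/2) • (A * π + π * A))).trace.im = 0 ∧
    (A * Jmean π hπ.1 A).trace.im = 0 ∧
    (A * Jmean π hπ.1 A).trace.re ≤ (A * (((1 : ℂ)/2) • (A * π + π * A))).trace.re ∧
    0 ≤ (A * Jmean π hπ.1 A).trace.re := by
  have hl := hπ.eigenvalues_pos
  have hw : ∀ i j, 0 ≤ eigenbasisWeight hπ.1 A i j := fun i j => Complex.normSq_nonneg _
  rw [trace_mul_half_smul_mul_add_mul hπ.1 hA, trace_mul_Jmean hπ hA]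
  simp only [Complex.ofReal_im, Complex.ofReal_re, true_and]
  constructor
  · exact Finset.sum_le_sum fun i _ => Finset.sum_le_sum fun j _ =>
      mul_le_mul_of_nonneg_left (integral_rpow_mul_rpow_one_sub_le (hl j) (hl i)) (hw i j)
  · exact Finset.sum_nonneg fun i _ => Finset.sum_nonneg fun j _ =>
      mul_nonneg (hw i j) (integral_rpow_mul_rpow_one_sub_nonneg (hl j).le (hl i).le)

/-- Kubo–Ando domination of the logarithmic mean by the arithmetic mean: for a faithful
density matrix `π` and Hermitian `A`,
`Tr[A (Aπ + πA)/2] ≥ Tr[A 𝕁(A)] ≥ 0`, all traces being real. -/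
theorem stmt4 {n : ℕ} (π : Matrix (Fin n) (Fin n) ℂ) (hπ : π.PosDef) (htr : π.trace = 1)
    (A : Matrix (Fin n) (Fin n) ℂ) (hA : A.IsHermitian) :
    (A * (((1 : ℂ)/2) • (A * π + π * A))).trace.im = 0 ∧
    (A * Jmean π hπ.1 A).trace.im = 0 ∧
    (A * Jmean π hπ.1 A).trace.re ≤ (A * (((1 : ℂ)/2) • (A * π + π * A))).trace.re ∧
    0 ≤ (A * Jmean π hπ.1 A).trace.re :=
  stmt4_general π hπ A hA
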